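/- arXiv:2509.03096 — 3 statements merged into one kernel-verified Lean document; each statement's English description precedes it below -/
import Mathlib

section
/- For each fixed dilution rate d with 0 < d < μmax and d·μ⁻¹(d) < ρmax, the microalgal productivity α ↦ P_out(α,d) is strictly concave on the open interval (0, 1 − d/φmax): for all α₁ ≠ α₂ in this interval and all t ∈ (0,1), P_out(t·α₁ + (1−t)·α₂, d) > t·P_out(α₁,d) + (1−t)·P_out(α₂,d). -/
/-- Inverse of the Monod bacterial growth rate: `φ⁻¹(y) = ks·y/(φmax − y)`. -/
noncomputable def phiInv (φmax ks y : ℝ) : ℝ := ks * y / (φmax - y)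

/-- Inverse of the Droop algal growth rate: `μ⁻¹(d) = qmin·μmax/(μmax − d)`. -/
noncomputable def muInv (μmax qmin d : ℝ) : ℝ := qmin * μmax / (μmax - d)

/-- Inverse of the vitamin uptake rate: `ρ⁻¹(w) = kv·w/(ρmax − w)`. -/
noncomputable def rhoInv (ρmax kv w : ℝ) : ℝ := kv * w / (ρmax - w)

/-- `ψα⁻¹(d) = φ⁻¹(d/(1−α)) + ρ⁻¹(d·μ⁻¹(d))/(α·β·γ)`. -/
noncomputable def psiInv (φmax ks ρmax kv μmax qmin β γ α d : ℝ) : ℝ :=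
  phiInv φmax ks (d / (1 - α)) +
    rhoInv ρmax kv (d * muInv μmax qmin d) / (α * β * γ)

/-- `d` is in the domain of `ψα⁻¹`: `d/(1−α) < φmax`, `d < μmax`, `d·μ⁻¹(d) < ρmax`. -/
def inDom (φmax ρmax μmax qmin α d : ℝ) : Prop :=
  d / (1 - α) < φmax ∧ d < μmax ∧ d * muInv μmax qmin d < ρmax

/-- Microalgal productivity `P_out(α,d) = α·β·γ·d·(s_in − ψα⁻¹(d))/μ⁻¹(d)`. -/
noncomputable def Pout (φmax ks ρmax kv μmax qmin β γ s_in α d : ℝ) : ℝ :=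
  α * β * γ * d * (s_in - psiInv φmax ks ρmax kv μmax qmin β γ α d) /
    muInv μmax qmin d


/-!
On `(0, c)` with `c = 1 − d/φmax`, clearing the denominator of `φ⁻¹(d/(1−α))` gives
`P_out(α,d) = (d/μ⁻¹(d))·(βγ·s_in·α − ρ⁻¹(d·μ⁻¹(d)) − (βγ·ks·d/φmax)·α/(c − α))`:
an affine function of `α` minus a positive multiple of `α/(c − α)`, which is strictly convex
on `α < c` since it equals `c/(c − α) − 1`.
-/

open Set

theorem StrictConvexOn.const_mul {𝕜 E : Type*} [Field 𝕜] [LinearOrder 𝕜] [IsStrictOrderedRing 𝕜]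
    [AddCommMonoid E] [Module 𝕜 E] {s : Set E} {f : E → 𝕜} {c : 𝕜}
    (hf : StrictConvexOn 𝕜 s f) (hc : 0 < c) : StrictConvexOn 𝕜 s fun x => c * f x := by
  refine ⟨hf.1, fun x hx y hy hxy a b ha hb hab => ?_⟩
  have h := mul_lt_mul_of_pos_left (hf.2 hx hy hxy ha hb hab) hc
  simp only [smul_eq_mul] at h ⊢
  linarith

theorem strictConvexOn_div_sub {c : ℝ} (hc : 0 < c) :
    StrictConvexOn ℝ (Iio c) fun x => x / (c - x) := by
  refine ⟨convex_Iio c, fun x hx y hy hxy a b ha hb hab => ?_⟩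
  obtain rfl : b = 1 - a := eq_sub_of_add_eq' hab
  have hx' : 0 < c - x := sub_pos.2 hx
  have hy' : 0 < c - y := sub_pos.2 hy
  have hm : 0 < c - (a * x + (1 - a) * y) := by nlinarith
  have hxy' : 0 < (x - y) ^ 2 := by positivity
  simp only [smul_eq_mul]
  rw [mul_div_assoc', mul_div_assoc', div_add_div _ _ hx'.ne' hy'.ne',
    div_lt_div_iff₀ hm (by positivity)]
  -- cross-multiplied, the two sides differ by `a·(1 − a)·c·(x − y)²`
  nlinarith [mul_pos (mul_pos ha hb) (mul_pos hc hxy')]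

theorem muInv_pos {μmax qmin d : ℝ} (hq : 0 < qmin) (hμ : 0 < μmax) (hdμ : d < μmax) :
    0 < muInv μmax qmin d :=
  div_pos (mul_pos hq hμ) (sub_pos.2 hdμ)

theorem Pout_eq_affine_sub_div (φmax ks ρmax kv μmax qmin β γ s_in α d : ℝ)
    (hφ : φmax ≠ 0) (hβ : β ≠ 0) (hγ : γ ≠ 0) (hα₀ : α ≠ 0) (hα₁ : α ≠ 1)
    (hαc : α ≠ 1 - d / φmax) :
    Pout φmax ks ρmax kv μmax qmin β γ s_in α d =
      d / muInv μmax qmin d * (β * γ * s_in) * α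
        - d / muInv μmax qmin d * rhoInv ρmax kv (d * muInv μmax qmin d)
        - d / muInv μmax qmin d * (β * γ * ks * d / φmax) * (α / (1 - d / φmax - α)) := by
  have h1 : 1 - α ≠ 0 := sub_ne_zero.2 hα₁.symm
  have h2 : 1 - d / φmax - α ≠ 0 := sub_ne_zero.2 hαc.symm
  have h3 : φmax - d / (1 - α) ≠ 0 := by
    rw [show φmax - d / (1 - α) = φmax * (1 - d / φmax - α) / (1 - α) by field_simp; ring]
    exact div_ne_zero (mul_ne_zero hφ h2) h1
  unfold Pout psiInv phiInv
  field_simp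
  ring

theorem Pout_strictConcaveOn (φmax ks ρmax kv μmax qmin β γ s_in d : ℝ)
    (hφ : 0 < φmax) (hks : 0 < ks) (hq : 0 < qmin) (hβ : 0 < β) (hγ : 0 < γ)
    (hd0 : 0 < d) (hdμ : d < μmax) (hdφ : d < φmax) :
    StrictConcaveOn ℝ (Ioo 0 (1 - d / φmax))
      fun α => Pout φmax ks ρmax kv μmax qmin β γ s_in α d := by
  set c := 1 - d / φmax
  set K := d / muInv μmax qmin d
  have hc : 0 < c := sub_pos.2 ((div_lt_one hφ).2 hdφ)
  have hK : 0 < K := div_pos hd0 (muInv_pos hq (hd0.trans hdμ) hdμ)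
  have haffine : ConcaveOn ℝ (Ioo 0 c) fun α =>
      LinearMap.mulLeft ℝ (K * (β * γ * s_in)) α
        + -(K * rhoInv ρmax kv (d * muInv μmax qmin d)) :=
    ((LinearMap.mulLeft ℝ _).concaveOn (convex_Ioo 0 c)).add_const _
  have hconvex :=
    ((strictConvexOn_div_sub hc).subset Ioo_subset_Iio_self (convex_Ioo 0 c)).const_mul
      (by positivity : 0 < K * (β * γ * ks * d / φmax))
  refine (haffine.sub_strictConvexOn hconvex).congr fun α ⟨hα0, hαc⟩ => ?_
  have hα1 : α < 1 := hαc.trans (sub_lt_self 1 (div_pos hd0 hφ))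
  rw [Pi.sub_apply, LinearMap.mulLeft_apply, Pout_eq_affine_sub_div φmax ks ρmax kv μmax qmin β γ
    s_in α d hφ.ne' hβ.ne' hγ.ne' hα0.ne' hα1.ne hαc.ne]
  ring

theorem Pout_strictConcave_in_alpha_general (φmax ks ρmax kv μmax qmin β γ s_in : ℝ)
    (hφ : 0 < φmax) (hks : 0 < ks)
    (hq : 0 < qmin) (hβ : 0 < β) (hγ : 0 < γ)
    (d : ℝ) (hd0 : 0 < d) (hdμ : d < μmax)
    (α₁ α₂ : ℝ) (h₁ : α₁ ∈ Set.Ioo (0 : ℝ) (1 - d / φmax))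
    (h₂ : α₂ ∈ Set.Ioo (0 : ℝ) (1 - d / φmax)) (hne : α₁ ≠ α₂)
    (t : ℝ) (ht : t ∈ Set.Ioo (0 : ℝ) 1) :
    t * Pout φmax ks ρmax kv μmax qmin β γ s_in α₁ d +
        (1 - t) * Pout φmax ks ρmax kv μmax qmin β γ s_in α₂ d <
      Pout φmax ks ρmax kv μmax qmin β γ s_in (t * α₁ + (1 - t) * α₂) d := by
  have hdφ : d < φmax := (div_lt_one hφ).1 (sub_pos.1 (h₁.1.trans h₁.2))
  exact (Pout_strictConcaveOn φmax ks ρmax kv μmax qmin β γ s_in d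
    hφ hks hq hβ hγ hd0 hdμ hdφ).2 h₁ h₂ hne ht.1 (sub_pos.2 ht.2) (add_sub_cancel t 1)

/-- for fixed `0 < d < μmax` with `d·μ⁻¹(d) < ρmax`, the productivity
`α ↦ P_out(α,d)` is strictly concave on `(0, 1 − d/φmax)`. -/
theorem Pout_strictConcave_in_alpha (φmax ks ρmax kv μmax qmin β γ s_in : ℝ)
    (hφ : 0 < φmax) (hks : 0 < ks) (hρ : 0 < ρmax) (hkv : 0 < kv)
    (hμ : 0 < μmax) (hq : 0 < qmin) (hβ : 0 < β) (hγ : 0 < γ) (hs : 0 < s_in)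
    (d : ℝ) (hd0 : 0 < d) (hdμ : d < μmax)
    (hdρ : d * muInv μmax qmin d < ρmax)
    (α₁ α₂ : ℝ) (h₁ : α₁ ∈ Set.Ioo (0 : ℝ) (1 - d / φmax))
    (h₂ : α₂ ∈ Set.Ioo (0 : ℝ) (1 - d / φmax)) (hne : α₁ ≠ α₂)
    (t : ℝ) (ht : t ∈ Set.Ioo (0 : ℝ) 1) :
    t * Pout φmax ks ρmax kv μmax qmin β γ s_in α₁ d +
        (1 - t) * Pout φmax ks ρmax kv μmax qmin β γ s_in α₂ d <
      Pout φmax ks ρmax kv μmax qmin β γ s_in (t * α₁ + (1 - t) * α₂) d :=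
  Pout_strictConcave_in_alpha_general φmax ks ρmax kv μmax qmin β γ s_in hφ hks hq hβ hγ d hd0 hdμ
    α₁ α₂ h₁ h₂ hne t ht
end

section
/- The admissible control set U = {(α,d) ∈ (0,1)×(0,∞) : d is in the domain of ψα⁻¹ and ψα⁻¹(d) < s_in} is a convex subset of ℝ². -/
/-- Admissible set `U = {(α,d) ∈ (0,1)×(0,∞) : d ∈ dom ψα⁻¹, ψα⁻¹(d) < s_in}`. -/
def Uset (φmax ks ρmax kv μmax qmin β γ s_in : ℝ) : Set (ℝ × ℝ) :=
  {u : ℝ × ℝ | 0 < u.1 ∧ u.1 < 1 ∧ 0 < u.2 ∧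
    inDom φmax ρmax μmax qmin u.1 u.2 ∧
    psiInv φmax ks ρmax kv μmax qmin β γ u.1 u.2 < s_in}

/-!
On its domain, `ψα⁻¹(d) = ks·d/A + G(d)/α` with `A = φmax(1 - α) - d` affine in `(α, d)` and
`G(d) = ρ⁻¹(d·μ⁻¹(d))/(βγ)` convex with `G(d)/d` nondecreasing. `ψ` is not jointly convex, but
after clearing denominators the constraint `ψ < s_in` at a convex combination of two admissible
points becomes a quadratic form in the weights: its diagonal terms are the slacks at the two
points, and its cross term could only be negative if one point were cheaper in `d/A`, the other
in `G/α`, and the ratio `A/α` favoured the wrong one. Monotonicity of `G(d)/d` together with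
`A + d + φmax·α = φmax` rules this out.
-/

open Set

section CrossTerm

variable {s ks : ℝ}

/-- The two swapped slacks add up to the two (positive) slacks. If one of them, say
`s - ks p₁ - q₂`, is negative, then `p₂ < p₁` and `q₁ < q₂`, so `h₂₁` makes its weight `α₂ A₁`
the smaller one. -/
lemma cross_slack_nonneg (hks : 0 ≤ ks) {α₁ α₂ A₁ A₂ p₁ p₂ q₁ q₂ : ℝ}
    (hα₁ : 0 < α₁) (hα₂ : 0 < α₂) (hA₁ : 0 < A₁) (hA₂ : 0 < A₂)
    (h₁ : ks * p₁ + q₁ < s) (h₂ : ks * p₂ + q₂ < s)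
    (h₁₂ : A₁ / α₁ < A₂ / α₂ → p₁ < p₂ → q₁ ≤ q₂)
    (h₂₁ : A₂ / α₂ < A₁ / α₁ → p₂ < p₁ → q₂ ≤ q₁) :
    0 ≤ α₁ * A₂ * (s - ks * p₂ - q₁) + α₂ * A₁ * (s - ks * p₁ - q₂) := by
  wlog h : 0 ≤ s - ks * p₂ - q₁ generalizing α₁ α₂ A₁ A₂ p₁ p₂ q₁ q₂
  · linarith [this hα₂ hα₁ hA₂ hA₁ h₂ h₁ h₂₁ h₁₂ (by linarith)]
  rcases le_or_gt 0 (s - ks * p₁ - q₂) with h' | h'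
  · positivity
  have hp : p₂ < p₁ := by
    by_contra! hp
    nlinarith [mul_le_mul_of_nonneg_left hp hks]
  have hr : A₁ * α₂ ≤ A₂ * α₁ := by
    rw [← div_le_div_iff₀ hα₁ hα₂]
    exact not_lt.mp fun hr => (h₂₁ hr hp).not_gt (by linarith)
  nlinarith [mul_pos hα₁ hA₂]

lemma add_div_lt_of_convexComb (hks : 0 ≤ ks) {α₁ α₂ A₁ A₂ d₁ d₂ g₁ g₂ a b : ℝ}
    (hα₁ : 0 < α₁) (hα₂ : 0 < α₂) (hA₁ : 0 < A₁) (hA₂ : 0 < A₂)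
    (ha : 0 ≤ a) (hb : 0 ≤ b) (hab : a + b = 1)
    (h₁ : ks * d₁ / A₁ + g₁ / α₁ < s) (h₂ : ks * d₂ / A₂ + g₂ / α₂ < s)
    (h₁₂ : A₁ / α₁ < A₂ / α₂ → d₁ / A₁ < d₂ / A₂ → g₁ / α₁ ≤ g₂ / α₂)
    (h₂₁ : A₂ / α₂ < A₁ / α₁ → d₂ / A₂ < d₁ / A₁ → g₂ / α₂ ≤ g₁ / α₁) :
    ks * (a * d₁ + b * d₂) / (a * A₁ + b * A₂) + (a * g₁ + b * g₂) / (a * α₁ + b * α₂) < s := by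
  have hα : 0 < a * α₁ + b * α₂ := convex_Ioi (0 : ℝ) hα₁ hα₂ ha hb hab
  have hA : 0 < a * A₁ + b * A₂ := convex_Ioi (0 : ℝ) hA₁ hA₂ ha hb hab
  simp only [mul_div_assoc] at h₁ h₂
  have hR := cross_slack_nonneg hks hα₁ hα₂ hA₁ hA₂ h₁ h₂ h₁₂ h₂₁
  obtain ⟨p₁, rfl⟩ : ∃ p, d₁ = p * A₁ := ⟨d₁ / A₁, (div_mul_cancel₀ _ hA₁.ne').symm⟩
  obtain ⟨p₂, rfl⟩ : ∃ p, d₂ = p * A₂ := ⟨d₂ / A₂, (div_mul_cancel₀ _ hA₂.ne').symm⟩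
  obtain ⟨q₁, rfl⟩ : ∃ q, g₁ = q * α₁ := ⟨g₁ / α₁, (div_mul_cancel₀ _ hα₁.ne').symm⟩
  obtain ⟨q₂, rfl⟩ : ∃ q, g₂ = q * α₂ := ⟨g₂ / α₂, (div_mul_cancel₀ _ hα₂.ne').symm⟩
  simp only [mul_div_cancel_right₀ _ hA₁.ne', mul_div_cancel_right₀ _ hA₂.ne',
    mul_div_cancel_right₀ _ hα₁.ne', mul_div_cancel_right₀ _ hα₂.ne'] at h₁ h₂ hR
  rw [div_add_div _ _ hA.ne' hα.ne', div_lt_iff₀ (mul_pos hA hα)]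
  have hT₁ : 0 < α₁ * A₁ * (s - ks * p₁ - q₁) := by nlinarith [mul_pos hα₁ hA₁]
  have hT₂ : 0 < α₂ * A₂ * (s - ks * p₂ - q₂) := by nlinarith [mul_pos hα₂ hA₂]
  have key : s * ((a * A₁ + b * A₂) * (a * α₁ + b * α₂)) -
      (ks * (a * (p₁ * A₁) + b * (p₂ * A₂)) * (a * α₁ + b * α₂) +
        (a * A₁ + b * A₂) * (a * (q₁ * α₁) + b * (q₂ * α₂))) =
      a ^ 2 * (α₁ * A₁ * (s - ks * p₁ - q₁)) + b ^ 2 * (α₂ * A₂ * (s - ks * p₂ - q₂)) +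
        a * b * (α₁ * A₂ * (s - ks * p₂ - q₁) + α₂ * A₁ * (s - ks * p₁ - q₂)) := by ring
  have hdiag : 0 < a ^ 2 * (α₁ * A₁ * (s - ks * p₁ - q₁)) +
      b ^ 2 * (α₂ * A₂ * (s - ks * p₂ - q₂)) := by
    rcases ha.eq_or_lt with rfl | ha'
    · obtain rfl : b = 1 := by linarith
      linarith
    · exact add_pos_of_pos_of_nonneg (by positivity) (by positivity)
  nlinarith [mul_nonneg (mul_nonneg ha hb) hR]

end CrossTerm

/-- Writing `G d / α = (G d / d) * (d / A) * (A / α)`: the first two factors force `d₂ < d₁`,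
hence `A₂ < A₁`, and then `α₁ < α₂` because `A + d + φ α` is the same at both points. -/
lemma div_le_div_of_monotoneOn_div {φ : ℝ} {G : ℝ → ℝ} {S : Set ℝ} (hφ : 0 ≤ φ)
    (hG : MonotoneOn (fun d => G d / d) S)
    {α₁ α₂ d₁ d₂ A₁ A₂ : ℝ} (hd₁S : d₁ ∈ S) (hd₂S : d₂ ∈ S) (hG₁ : 0 ≤ G d₁)
    (hα₁ : 0 < α₁) (hα₂ : 0 < α₂) (hd₁ : 0 < d₁) (hd₂ : 0 < d₂) (hA₁ : 0 < A₁) (hA₂ : 0 < A₂)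
    (hA₁e : A₁ = φ * (1 - α₁) - d₁) (hA₂e : A₂ = φ * (1 - α₂) - d₂)
    (hr : A₁ / α₁ < A₂ / α₂) (hp : d₁ / A₁ < d₂ / A₂) : G d₁ / α₁ ≤ G d₂ / α₂ := by
  have factor : ∀ {α d A : ℝ}, 0 < α → 0 < d → 0 < A → G d / α = G d / d * (d / A) * (A / α) :=
    fun hα hd hA => by field_simp
  by_contra! hq
  have hk : G d₂ / d₂ < G d₁ / d₁ := by
    by_contra! hk
    have : G d₁ / d₁ * (d₁ / A₁) * (A₁ / α₁) ≤ G d₂ / d₂ * (d₂ / A₂) * (A₂ / α₂) := by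
      have hk₁ : 0 ≤ G d₁ / d₁ := div_nonneg hG₁ hd₁.le
      have hk₂ := hk₁.trans hk
      gcongr
    rw [← factor hα₁ hd₁ hA₁, ← factor hα₂ hd₂ hA₂] at this
    exact this.not_gt hq
  have hd : d₂ < d₁ := not_le.mp fun h => hk.not_ge (hG hd₁S hd₂S h)
  rw [div_lt_div_iff₀ hA₁ hA₂] at hp
  have hA : A₂ < A₁ := by nlinarith
  have hα : α₁ < α₂ := by nlinarith
  exact hr.not_gt (div_lt_div₀ hA hα.le hA₁.le hα₁)

lemma phiInv_div (φmax ks d : ℝ) {c : ℝ} (hc : c ≠ 0) :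
    phiInv φmax ks (d / c) = phiInv (φmax * c) ks d := by
  rw [phiInv, phiInv, show φmax - d / c = (φmax * c - d) / c by field_simp, mul_div_assoc',
    div_div_div_cancel_right₀ hc]

section RhoInv

variable {ρmax kv : ℝ}

lemma rhoInv_div (ρmax kv w c : ℝ) : rhoInv ρmax kv w / c = rhoInv ρmax (kv / c) w := by
  simp only [rhoInv]
  ring

lemma rhoInv_nonneg (hkv : 0 ≤ kv) {w : ℝ} (hw : 0 ≤ w) (hwρ : w < ρmax) :
    0 ≤ rhoInv ρmax kv w :=
  div_nonneg (mul_nonneg hkv hw) (sub_pos.2 hwρ).le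

/-- The chord defect is `kv ρmax a b (x - y)² / ((ρmax - x) (ρmax - y) (ρmax - (a x + b y)))`. -/
lemma convexOn_rhoInv (hρ : 0 ≤ ρmax) (hkv : 0 ≤ kv) : ConvexOn ℝ (Iio ρmax) (rhoInv ρmax kv) := by
  refine ⟨convex_Iio ρmax, fun x hx y hy a b ha hb hab => ?_⟩
  have hX : 0 < ρmax - x := sub_pos.2 hx
  have hY : 0 < ρmax - y := sub_pos.2 hy
  have hZ : ρmax - (a * x + b * y) = a * (ρmax - x) + b * (ρmax - y) := by
    linear_combination ρmax * hab.symm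
  have hZpos : 0 < a * (ρmax - x) + b * (ρmax - y) := convex_Ioi (0 : ℝ) hX hY ha hb hab
  simp only [rhoInv, smul_eq_mul, hZ]
  rw [mul_div_assoc', mul_div_assoc', div_add_div _ _ hX.ne' hY.ne',
    div_le_div_iff₀ hZpos (mul_pos hX hY)]
  obtain rfl : b = 1 - a := by linarith
  have hdefect : 0 ≤ kv * ρmax * (a * (1 - a)) * (x - y) ^ 2 := by positivity
  linarith

lemma monotoneOn_rhoInv_div (hkv : 0 ≤ kv) :
    MonotoneOn (fun w => rhoInv ρmax kv w / w) (Ioo 0 ρmax) := by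
  have hratio : ∀ w ∈ Ioo 0 ρmax, rhoInv ρmax kv w / w = kv / (ρmax - w) := fun w hw => by
    rw [rhoInv]
    field_simp [hw.1.ne']
  intro x hx y hy hxy
  simp only [hratio x hx, hratio y hy]
  gcongr
  exact sub_pos.2 hy.2

end RhoInv

/-- `d ↦ ρ⁻¹(d·μ⁻¹(d))` is again of the shape of `ρ⁻¹` (Möbius maps fixing `0` compose), with
maximum `rhoMuMax` and gain `rhoMuGain`. -/
noncomputable def rhoMuMax (ρmax μmax qmin : ℝ) : ℝ := ρmax * μmax / (ρmax + qmin * μmax)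

noncomputable def rhoMuGain (ρmax kv μmax qmin : ℝ) : ℝ := kv * qmin * μmax / (ρmax + qmin * μmax)

section Model

variable {φmax ks ρmax kv μmax qmin β γ s_in : ℝ}

lemma mul_muInv_lt_iff {d : ℝ} (hd : d < μmax) (hN : 0 < ρmax + qmin * μmax) :
    d * muInv μmax qmin d < ρmax ↔ d < rhoMuMax ρmax μmax qmin := by
  rw [muInv, rhoMuMax, mul_div_assoc', div_lt_iff₀ (sub_pos.2 hd), lt_div_iff₀ hN]
  constructor <;> intro h <;> linarith

lemma rhoInv_mul_muInv {d : ℝ} (hd : d ≠ μmax) (hN : ρmax + qmin * μmax ≠ 0) :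
    rhoInv ρmax kv (d * muInv μmax qmin d) =
      rhoInv (rhoMuMax ρmax μmax qmin) (rhoMuGain ρmax kv μmax qmin) d := by
  have hμd : μmax - d ≠ 0 := sub_ne_zero.2 hd.symm
  have hden : ρmax - d * muInv μmax qmin d =
      (ρmax + qmin * μmax) * (rhoMuMax ρmax μmax qmin - d) / (μmax - d) := by
    rw [muInv, rhoMuMax]
    field_simp
    ring
  rw [rhoInv, rhoInv, hden, rhoMuGain, muInv]
  field_simp

lemma psiInv_eq {α d : ℝ} (hα : α ≠ 1) (hd : d ≠ μmax) (hN : ρmax + qmin * μmax ≠ 0) :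
    psiInv φmax ks ρmax kv μmax qmin β γ α d =
      phiInv (φmax * (1 - α)) ks d +
        rhoInv (rhoMuMax ρmax μmax qmin) (rhoMuGain ρmax kv μmax qmin / (β * γ)) d / α := by
  rw [psiInv, phiInv_div _ _ _ (sub_ne_zero.2 hα.symm), rhoInv_mul_muInv hd hN, ← rhoInv_div,
    div_div, mul_assoc, mul_comm (β * γ)]

lemma mem_Uset_iff (hρ : 0 < ρmax) (hμ : 0 < μmax) (hq : 0 < qmin) {u : ℝ × ℝ} :
    u ∈ Uset φmax ks ρmax kv μmax qmin β γ s_in ↔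
      0 < u.1 ∧ u.1 < 1 ∧ 0 < u.2 ∧ 0 < φmax * (1 - u.1) - u.2 ∧ u.2 < μmax ∧
        u.2 < rhoMuMax ρmax μmax qmin ∧
        ks * u.2 / (φmax * (1 - u.1) - u.2) +
          rhoInv (rhoMuMax ρmax μmax qmin) (rhoMuGain ρmax kv μmax qmin / (β * γ)) u.2 / u.1 <
            s_in := by
  obtain ⟨α, d⟩ := u
  have hN : 0 < ρmax + qmin * μmax := by positivity
  simp only [Uset, inDom, mem_ofPred_eq]
  constructor
  · rintro ⟨hα, hα1, hd, ⟨hφd, hμd, hρd⟩, hψ⟩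
    rw [div_lt_iff₀ (sub_pos.2 hα1), ← sub_pos] at hφd
    rw [psiInv_eq hα1.ne hμd.ne hN.ne', phiInv] at hψ
    exact ⟨hα, hα1, hd, hφd, hμd, (mul_muInv_lt_iff hμd hN).1 hρd, hψ⟩
  · rintro ⟨hα, hα1, hd, hφd, hμd, hρd, hψ⟩
    rw [← phiInv, ← psiInv_eq hα1.ne hμd.ne hN.ne'] at hψ
    refine ⟨hα, hα1, hd, ⟨?_, hμd, (mul_muInv_lt_iff hμd hN).2 hρd⟩, hψ⟩
    rwa [div_lt_iff₀ (sub_pos.2 hα1), ← sub_pos]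

end Model

theorem Uset_convex_general (φmax ks ρmax kv μmax qmin β γ s_in : ℝ)
    (hφ : 0 < φmax) (hks : 0 < ks) (hρ : 0 < ρmax) (hkv : 0 < kv)
    (hμ : 0 < μmax) (hq : 0 < qmin) (hβ : 0 < β) (hγ : 0 < γ) :
    Convex ℝ (Uset φmax ks ρmax kv μmax qmin β γ s_in) := by
  set G := rhoInv (rhoMuMax ρmax μmax qmin) (rhoMuGain ρmax kv μmax qmin / (β * γ))
  have hgain : 0 ≤ rhoMuGain ρmax kv μmax qmin / (β * γ) := by unfold rhoMuGain; positivity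
  have hGconv : ConvexOn ℝ (Iio (rhoMuMax ρmax μmax qmin)) G :=
    convexOn_rhoInv (by unfold rhoMuMax; positivity) hgain
  have hGratio : MonotoneOn (fun d => G d / d) (Ioo 0 (rhoMuMax ρmax μmax qmin)) :=
    monotoneOn_rhoInv_div hgain
  rintro ⟨α₁, d₁⟩ h₁ ⟨α₂, d₂⟩ h₂ a b ha hb hab
  rw [mem_Uset_iff hρ hμ hq] at h₁ h₂ ⊢
  obtain ⟨hα₁, hα₁1, hd₁, hA₁, hμ₁, hρ₁, hψ₁⟩ := h₁
  obtain ⟨hα₂, hα₂1, hd₂, hA₂, hμ₂, hρ₂, hψ₂⟩ := h₂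
  simp only [Prod.smul_mk, Prod.mk_add_mk, smul_eq_mul]
  have hA : φmax * (1 - (a * α₁ + b * α₂)) - (a * d₁ + b * d₂) =
      a * (φmax * (1 - α₁) - d₁) + b * (φmax * (1 - α₂) - d₂) := by
    linear_combination φmax * hab.symm
  have hα : 0 < a * α₁ + b * α₂ := convex_Ioi (0 : ℝ) hα₁ hα₂ ha hb hab
  rw [hA]
  refine ⟨hα, convex_Iio (1 : ℝ) hα₁1 hα₂1 ha hb hab, convex_Ioi (0 : ℝ) hd₁ hd₂ ha hb hab,
    convex_Ioi (0 : ℝ) hA₁ hA₂ ha hb hab, convex_Iio μmax hμ₁ hμ₂ ha hb hab,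
    convex_Iio (rhoMuMax ρmax μmax qmin) hρ₁ hρ₂ ha hb hab, ?_⟩
  calc _ ≤ ks * (a * d₁ + b * d₂) / _ + (a * G d₁ + b * G d₂) / (a * α₁ + b * α₂) := by
        gcongr
        exact hGconv.2 hρ₁ hρ₂ ha hb hab
    _ < s_in := add_div_lt_of_convexComb hks.le hα₁ hα₂ hA₁ hA₂ ha hb hab hψ₁ hψ₂
        (div_le_div_of_monotoneOn_div hφ.le hGratio ⟨hd₁, hρ₁⟩ ⟨hd₂, hρ₂⟩
          (rhoInv_nonneg hgain hd₁.le hρ₁) hα₁ hα₂ hd₁ hd₂ hA₁ hA₂ rfl rfl)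
        (div_le_div_of_monotoneOn_div hφ.le hGratio ⟨hd₂, hρ₂⟩ ⟨hd₁, hρ₁⟩
          (rhoInv_nonneg hgain hd₂.le hρ₂) hα₂ hα₁ hd₂ hd₁ hA₂ hA₁ rfl rfl)

/-- the admissible control set `U` is a convex subset of `ℝ²`. -/
theorem Uset_convex (φmax ks ρmax kv μmax qmin β γ s_in : ℝ)
    (hφ : 0 < φmax) (hks : 0 < ks) (hρ : 0 < ρmax) (hkv : 0 < kv)
    (hμ : 0 < μmax) (hq : 0 < qmin) (hβ : 0 < β) (hγ : 0 < γ) (hs : 0 < s_in) :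
    Convex ℝ (Uset φmax ks ρmax kv μmax qmin β γ s_in) :=
  Uset_convex_general φmax ks ρmax kv μmax qmin β γ s_in hφ hks hρ hkv hμ hq hβ hγ
end

section
/- Fix α ∈ (0,1), s_in > 0, and a dilution rate d > 0 with d/(1−α) < φmax and d < (1−α)·φ(s_in), and define s* = φ⁻¹(d/(1−α)), e* = (1−α)·γ·(s_in − s*), v_in* = α·β·γ·(s_in − s*), and q₀ = qmin + ρ(v_in*)/μmax. Then the algal-washout point (s*, e*, v_in*, q₀, 0) is an equilibrium of the consortium dynamics: −(1/γ)·φ(s*)·e* + d·(s_in − s*) = 0, (1−α)·φ(s*)·e* − d·e* = 0, α·β·φ(s*)·e* − ρ(v_in*)·0 − d·v_in* = 0, ρ(v_in*) − μ(q₀)·q₀ = 0, and μ(q₀)·0 − d·0 = 0. -/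
/-- Monod bacterial growth rate `φ(s) = φmax·s/(ks + s)`. -/
noncomputable def phiRate (φmax ks s : ℝ) : ℝ := φmax * s / (ks + s)

/-- Vitamin uptake rate `ρ(v) = ρmax·v/(kv + v)`. -/
noncomputable def rhoRate (ρmax kv v : ℝ) : ℝ := ρmax * v / (kv + v)

/-- Droop algal growth rate `μ(q) = μmax·(1 − qmin/q)`. -/
noncomputable def muRate (μmax qmin q : ℝ) : ℝ := μmax * (1 - qmin / q)

/-! The Monod rate `φ` is inverted by `φ⁻¹` and is strictly increasing on `(-ks, ∞)`. Hence
`φ(s*) = d/(1-α)`, which makes the first three right-hand sides vanish, and the washout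
condition `d < (1-α)·φ(s_in)` gives `s* < s_in`. So `v_in* ≥ 0` and `q₀ > 0`, and the Droop
identity `μ(q)·q = μmax·(q - qmin)` turns the fourth right-hand side into `ρ(v_in*) - ρ(v_in*)`. -/

open Set

lemma add_phiInv (φmax ks : ℝ) {y : ℝ} (hy : y ≠ φmax) :
    ks + phiInv φmax ks y = ks * φmax / (φmax - y) := by
  have hy' : φmax - y ≠ 0 := sub_ne_zero.mpr hy.symm
  rw [phiInv]
  field_simp
  ring

lemma phiRate_phiInv {φmax ks y : ℝ} (hφ : φmax ≠ 0) (hks : ks ≠ 0) (hy : y ≠ φmax) :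
    phiRate φmax ks (phiInv φmax ks y) = y := by
  have hy' : φmax - y ≠ 0 := sub_ne_zero.mpr hy.symm
  rw [phiRate, add_phiInv φmax ks hy, phiInv]
  field_simp

lemma neg_lt_phiInv {φmax ks y : ℝ} (hφ : 0 < φmax) (hks : 0 < ks) (hy : y < φmax) :
    -ks < phiInv φmax ks y := by
  have hden : 0 < φmax - y := sub_pos.mpr hy
  rw [neg_lt_iff_pos_add', add_phiInv φmax ks hy.ne]
  positivity

lemma phiRate_strictMonoOn {φmax ks : ℝ} (hφ : 0 < φmax) (hks : 0 < ks) :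
    StrictMonoOn (phiRate φmax ks) (Ioi (-ks)) := by
  intro a ha b hb hab
  have ha' : 0 < ks + a := by linarith [mem_Ioi.mp ha]
  have hb' : 0 < ks + b := by linarith [mem_Ioi.mp hb]
  rw [phiRate, phiRate, div_lt_div_iff₀ ha' hb']
  nlinarith [mul_lt_mul_of_pos_left hab (mul_pos hφ hks)]

lemma rhoRate_nonneg {ρmax kv v : ℝ} (hρ : 0 ≤ ρmax) (hkv : 0 ≤ kv) (hv : 0 ≤ v) :
    0 ≤ rhoRate ρmax kv v := by
  unfold rhoRate
  positivity

lemma muRate_mul_self (μmax qmin : ℝ) {q : ℝ} (hq : q ≠ 0) :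
    muRate μmax qmin q * q = μmax * (q - qmin) := by
  unfold muRate
  field_simp

theorem algal_washout_equilibrium_general (φmax ks ρmax kv μmax qmin β γ : ℝ)
    (hφ : 0 < φmax) (hks : 0 < ks) (hρ : 0 < ρmax) (hkv : 0 < kv)
    (hμ : 0 < μmax) (hq : 0 < qmin) (hβ : 0 < β) (hγ : 0 < γ)
    (α : ℝ) (hα0 : 0 < α) (hα1 : α < 1)
    (s_in : ℝ) (hs : 0 < s_in)
    (d : ℝ) (hdφ : d / (1 - α) < φmax)
    (hdwash : d < (1 - α) * phiRate φmax ks s_in)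
    (sstar estar vinstar q0 : ℝ)
    (hsstar : sstar = phiInv φmax ks (d / (1 - α)))
    (hestar : estar = (1 - α) * γ * (s_in - sstar))
    (hvinstar : vinstar = α * β * γ * (s_in - sstar))
    (hq0 : q0 = qmin + rhoRate ρmax kv vinstar / μmax) :
    -(1 / γ) * phiRate φmax ks sstar * estar + d * (s_in - sstar) = 0 ∧
    (1 - α) * phiRate φmax ks sstar * estar - d * estar = 0 ∧
    α * β * phiRate φmax ks sstar * estar - rhoRate ρmax kv vinstar * 0 -
      d * vinstar = 0 ∧
    rhoRate ρmax kv vinstar - muRate μmax qmin q0 * q0 = 0 ∧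
    muRate μmax qmin q0 * 0 - d * 0 = 0 := by
  have h1α : 0 < 1 - α := sub_pos.mpr hα1
  have hd_eq : (1 - α) * (d / (1 - α)) = d := mul_div_cancel₀ d h1α.ne'
  have hφs : phiRate φmax ks sstar = d / (1 - α) :=
    hsstar ▸ phiRate_phiInv hφ.ne' hks.ne' hdφ.ne
  have hs_lt : sstar < s_in := by
    refine (phiRate_strictMonoOn hφ hks).lt_iff_lt ?_ ?_ |>.mp ?_
    · exact hsstar ▸ neg_lt_phiInv hφ hks hdφ
    · exact mem_Ioi.mpr (by linarith)
    · rwa [hφs, div_lt_iff₀' h1α]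
  have hv : 0 ≤ vinstar := by
    rw [hvinstar]
    have := sub_pos.mpr hs_lt
    positivity
  have hq0_pos : 0 < q0 := by
    rw [hq0]
    have := rhoRate_nonneg hρ.le hkv.le hv
    positivity
  refine ⟨?_, ?_, ?_, ?_, by ring⟩
  · rw [hφs, hestar]
    field_simp
    ring
  · rw [hφs]
    linear_combination estar * hd_eq
  · rw [hφs, hestar, hvinstar]
    linear_combination α * β * γ * (s_in - sstar) * hd_eq
  · rw [muRate_mul_self μmax qmin hq0_pos.ne', hq0, add_sub_cancel_left,
      mul_div_cancel₀ _ hμ.ne', sub_self]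

/-- the algal-washout point `(s*, e*, v_in*, q₀, 0)` is an
equilibrium of the consortium dynamics. -/
theorem algal_washout_equilibrium (φmax ks ρmax kv μmax qmin β γ : ℝ)
    (hφ : 0 < φmax) (hks : 0 < ks) (hρ : 0 < ρmax) (hkv : 0 < kv)
    (hμ : 0 < μmax) (hq : 0 < qmin) (hβ : 0 < β) (hγ : 0 < γ)
    (α : ℝ) (hα0 : 0 < α) (hα1 : α < 1)
    (s_in : ℝ) (hs : 0 < s_in)
    (d : ℝ) (hd : 0 < d) (hdφ : d / (1 - α) < φmax)
    (hdwash : d < (1 - α) * phiRate φmax ks s_in)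
    (sstar estar vinstar q0 : ℝ)
    (hsstar : sstar = phiInv φmax ks (d / (1 - α)))
    (hestar : estar = (1 - α) * γ * (s_in - sstar))
    (hvinstar : vinstar = α * β * γ * (s_in - sstar))
    (hq0 : q0 = qmin + rhoRate ρmax kv vinstar / μmax) :
    -(1 / γ) * phiRate φmax ks sstar * estar + d * (s_in - sstar) = 0 ∧
    (1 - α) * phiRate φmax ks sstar * estar - d * estar = 0 ∧
    α * β * phiRate φmax ks sstar * estar - rhoRate ρmax kv vinstar * 0 -
      d * vinstar = 0 ∧
    rhoRate ρmax kv vinstar - muRate μmax qmin q0 * q0 = 0 ∧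
    muRate μmax qmin q0 * 0 - d * 0 = 0 :=
  algal_washout_equilibrium_general φmax ks ρmax kv μmax qmin β γ hφ hks hρ hkv hμ hq hβ hγ α hα0
    hα1 s_in hs d hdφ hdwash sstar estar vinstar q0 hsstar hestar hvinstar hq0
end
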